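/- arXiv:2503.20883 — 2 statements merged into one kernel-verified Lean document; each statement's English description precedes it below -/
import Mathlib

section
/- Let G=(V,E) be a graph of positive edges over a complete signed graph, and for S ⊆ V define cost(S) = (1/2)·|E⁺(S, V∖S)| + |E⁻(S)|, where E⁺(S,V∖S) is the set of positive edges with exactly one endpoint in S and E⁻(S) is the set of negative edges with both endpoints in S. Suppose d_cross : V → ℝ assigns to each v a nonnegative value, and define cover(S) = cost(S) + Σ_{v∈S} d_cross(v). If U ⊂ W ⊆ V (strict inclusion) and for every v ∈ W∖U we have d_cross(v) > |E⁺(v, U)|/2 (where E⁺(v,U) denotes positive edges from v into U), then cover(U) < cover(W). -/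
open Finset

variable {V : Type*} [Fintype V] [DecidableEq V]

/-- Number of ordered pairs `(u, v)` with `u ∈ S`, `v ∉ S`, `adj u v`;
this counts each positive edge leaving `S` exactly once (per endpoint in `S`). -/
def posCross (adj : V → V → Prop) [DecidableRel adj] (S : Finset V) : ℕ :=
  ((univ ×ˢ univ).filter fun p : V × V => p.1 ∈ S ∧ p.2 ∉ S ∧ adj p.1 p.2).card

/-- Number of ordered pairs of distinct non-adjacent vertices inside `S`;
this equals twice `|E⁻(S)|`. -/
def negInsideTwice (adj : V → V → Prop) [DecidableRel adj] (S : Finset V) : ℕ :=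
  ((univ ×ˢ univ).filter fun p : V × V =>
    p.1 ∈ S ∧ p.2 ∈ S ∧ p.1 ≠ p.2 ∧ ¬ adj p.1 p.2).card

/-- `cost(S) = (1/2)·|E⁺(S, V∖S)| + |E⁻(S)|`. -/
noncomputable def clusterCost (adj : V → V → Prop) [DecidableRel adj] (S : Finset V) : ℝ :=
  (posCross adj S : ℝ) / 2 + (negInsideTwice adj S : ℝ) / 2

/-- `cover(S) = cost(S) + Σ_{v ∈ S} d_cross(v)`. -/
noncomputable def coverCost (adj : V → V → Prop) [DecidableRel adj]
    (dcross : V → ℝ) (S : Finset V) : ℝ :=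
  clusterCost adj S + ∑ v ∈ S, dcross v

/-! Enlarging `U` to `W` can only lower the positive part of the cost through positive edges
from `U` into `W \ U`, each `v ∈ W \ U` accounting for at most `|E⁺(v, U)| / 2`, while the
negative part only grows. Since `d_cross v` strictly exceeds that saving and `W \ U ≠ ∅`,
the cover strictly increases. -/

section

variable (adj : V → V → Prop) [DecidableRel adj]

lemma card_filter_adj_pairs_eq_sum (hsym : ∀ u v, adj u v → adj v u) (U T : Finset V) :
    ((univ ×ˢ univ).filter fun p : V × V => p.1 ∈ U ∧ p.2 ∈ T ∧ adj p.1 p.2).card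
      = ∑ v ∈ T, (U.filter (adj v)).card := by
  rw [card_eq_sum_card_fiberwise (f := Prod.snd) (t := T) (fun p hp => (mem_filter.mp hp).2.2.1)]
  refine sum_congr rfl fun v hv => card_bij (fun p _ => p.1) ?_ ?_ ?_
  · rintro ⟨u, w⟩ hp
    simp only [mem_filter, mem_product, mem_univ, true_and] at hp
    obtain ⟨⟨hu, -, hadj⟩, rfl⟩ := hp
    exact mem_filter.mpr ⟨hu, hsym _ _ hadj⟩
  · intro p hp q hq h
    exact Prod.ext h ((mem_filter.mp hp).2.trans (mem_filter.mp hq).2.symm)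
  · intro u hu
    obtain ⟨hu, hadj⟩ := mem_filter.mp hu
    exact ⟨(u, v), by simp [hu, hv, hsym _ _ hadj], rfl⟩

lemma posCross_le_add_sum (hsym : ∀ u v, adj u v → adj v u) {U W : Finset V} (hUW : U ⊆ W) :
    posCross adj U ≤ posCross adj W + ∑ v ∈ W \ U, (U.filter (adj v)).card := by
  rw [← card_filter_adj_pairs_eq_sum adj hsym U (W \ U), posCross, posCross]
  refine (card_le_card fun p hp => ?_).trans (card_union_le _ _)
  simp only [mem_filter, mem_union, mem_sdiff, mem_product, mem_univ, true_and] at hp ⊢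
  obtain ⟨hU, hnU, hadj⟩ := hp
  by_cases hW : p.2 ∈ W
  · exact Or.inr ⟨hU, ⟨hW, hnU⟩, hadj⟩
  · exact Or.inl ⟨hUW hU, hW, hadj⟩

lemma negInsideTwice_mono : Monotone (negInsideTwice adj) := fun _ _ hUW =>
  card_le_card <| monotone_filter_right _ fun _ _ hp => ⟨hUW hp.1, hUW hp.2.1, hp.2.2⟩

lemma clusterCost_le_add_sum (hsym : ∀ u v, adj u v → adj v u) {U W : Finset V}
    (hUW : U ⊆ W) :
    clusterCost adj U ≤
      clusterCost adj W + ∑ v ∈ W \ U, ((U.filter (adj v)).card : ℝ) / 2 := by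
  have hpos : (posCross adj U : ℝ) ≤
      posCross adj W + ∑ v ∈ W \ U, ((U.filter (adj v)).card : ℝ) := by
    exact_mod_cast posCross_le_add_sum adj hsym hUW
  have hneg : (negInsideTwice adj U : ℝ) ≤ negInsideTwice adj W := by
    exact_mod_cast negInsideTwice_mono adj hUW
  rw [clusterCost, clusterCost, ← sum_div]
  linarith

end

theorem cover_strict_mono_general (adj : V → V → Prop) [DecidableRel adj]
    (hsym : ∀ u v, adj u v → adj v u)
    (dcross : V → ℝ)
    (U W : Finset V) (hUW : U ⊂ W)
    (hd : ∀ v ∈ W \ U, ((U.filter (adj v)).card : ℝ) / 2 < dcross v) :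
    coverCost adj dcross U < coverCost adj dcross W := by
  have hsaving : ∑ v ∈ W \ U, ((U.filter (adj v)).card : ℝ) / 2 < ∑ v ∈ W \ U, dcross v :=
    sum_lt_sum_of_nonempty (sdiff_nonempty.mpr hUW.not_subset) hd
  have hcost := clusterCost_le_add_sum adj hsym hUW.subset
  rw [coverCost, coverCost, ← sum_sdiff hUW.subset]
  linarith

/-- If `U ⊂ W` and every `v ∈ W \ U` has
`d_cross(v) > |E⁺(v, U)|/2`, then `cover(U) < cover(W)`. -/
theorem cover_strict_mono (adj : V → V → Prop) [DecidableRel adj]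
    (hsym : ∀ u v, adj u v → adj v u)
    (dcross : V → ℝ) (hd0 : ∀ v, 0 ≤ dcross v)
    (U W : Finset V) (hUW : U ⊂ W)
    (hd : ∀ v ∈ W \ U, ((U.filter (adj v)).card : ℝ) / 2 < dcross v) :
    coverCost adj dcross U < coverCost adj dcross W :=
  cover_strict_mono_general adj hsym dcross U W hUW hd
end

section
/- Under the MWU update of the previous setting with T = log(1/γ)/γ⁴ rounds, suppose additionally that each round's margins satisfy ⟨p^{(t)}, m^{(t)}⟩ ≥ 0, and let U ⊆ V be the set of vertices u with Σ_{t≤T} m_u^{(t)} ≤ −2γT. Then Σ_{u∈U} w_u^{(1)} ≤ γ · Σ_{v∈V} w_v^{(1)}. -/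
open Finset Real

/-!
Track the potential `Φ_t = ∑_v w_t v`. Since `|γ³ m| ≤ γ² ≤ 1`, the second-order bound
`exp y ≤ 1 + y + y²` gives `Φ_{t+1} ≤ Φ_t - γ³ ∑_v w_t v m_t v + γ⁴ Φ_t ≤ exp (γ⁴) Φ_t`, the middle
term being `≤ 0` by the margin hypothesis; hence `Φ_{T+1} ≤ exp (γ⁴ T) Φ_1 = Φ_1 / γ`. On the other
hand every `u ∈ U` has `w_{T+1} u ≥ w_1 u · exp (2 γ⁴ T)`, and comparing the two bounds leaves the
factor `exp (-γ⁴ T) = γ`.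
-/

lemma exp_neg_cube_mul_le {γ x : ℝ} (hγ0 : 0 < γ) (hγ1 : γ ≤ 1)
    (hx1 : -1 ≤ x) (hx2 : x ≤ 1 / γ - 1) :
    exp (-(γ ^ 3) * x) ≤ 1 - γ ^ 3 * x + γ ^ 4 := by
  have hx : |x| ≤ 1 / γ := abs_le.mpr ⟨by linarith [one_le_one_div hγ0 hγ1], by linarith⟩
  have hy : |-(γ ^ 3) * x| ≤ γ ^ 2 :=
    calc |-(γ ^ 3) * x| = γ ^ 3 * |x| := by rw [abs_mul, abs_neg, abs_of_pos (by positivity)]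
      _ ≤ γ ^ 3 * (1 / γ) := by gcongr
      _ = γ ^ 2 := by field_simp
  have hsq : (-(γ ^ 3) * x) ^ 2 ≤ γ ^ 4 := by
    rw [← sq_abs]
    calc |-(γ ^ 3) * x| ^ 2 ≤ (γ ^ 2) ^ 2 := by gcongr
      _ = γ ^ 4 := by ring
  have hy1 : |-(γ ^ 3) * x| ≤ 1 := hy.trans (pow_le_one₀ hγ0.le hγ1)
  linarith [(abs_le.mp (abs_exp_sub_one_sub_id_le hy1)).2]

lemma eq_mul_exp_sum_of_succ_eq_mul_exp {a c : ℕ → ℝ} {T : ℕ}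
    (h : ∀ t ∈ Icc 1 T, a (t + 1) = a t * exp (c t)) :
    ∀ t ≤ T, a (t + 1) = a 1 * exp (∑ s ∈ Icc 1 t, c s) := by
  intro t
  induction t with
  | zero => simp
  | succ n ih =>
    intro ht
    rw [h (n + 1) (mem_Icc.mpr ⟨by omega, ht⟩), ih (by omega), sum_Icc_succ_top (by omega),
      exp_add, mul_assoc]

lemma sum_mul_nonneg_of_sum_div_mul_nonneg {ι : Type*} {s : Finset ι} {w m : ι → ℝ}
    (hw : ∀ i ∈ s, 0 ≤ w i) (h : 0 ≤ ∑ i ∈ s, (w i / ∑ j ∈ s, w j) * m i) :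
    0 ≤ ∑ i ∈ s, w i * m i := by
  rcases (sum_nonneg hw).eq_or_lt with hS | hS
  · rw [sum_eq_zero fun i hi => by rw [(sum_eq_zero_iff_of_nonneg hw).mp hS.symm i hi, zero_mul]]
  · have hmul : ∑ i ∈ s, w i * m i = (∑ j ∈ s, w j) * ∑ i ∈ s, (w i / ∑ j ∈ s, w j) * m i := by
      rw [mul_sum]
      exact sum_congr rfl fun i _ => by field_simp
    rw [hmul]
    exact mul_nonneg hS.le h

lemma sum_mul_exp_le_exp_mul_sum {ι : Type*} {s : Finset ι} {w m : ι → ℝ} {η ε : ℝ}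
    (hw : ∀ i ∈ s, 0 ≤ w i) (hη : 0 ≤ η)
    (hexp : ∀ i ∈ s, exp (-η * m i) ≤ 1 - η * m i + ε)
    (hmargin : 0 ≤ ∑ i ∈ s, w i * m i) :
    ∑ i ∈ s, w i * exp (-η * m i) ≤ exp ε * ∑ i ∈ s, w i :=
  calc ∑ i ∈ s, w i * exp (-η * m i) ≤ ∑ i ∈ s, w i * (1 - η * m i + ε) :=
        sum_le_sum fun i hi => mul_le_mul_of_nonneg_left (hexp i hi) (hw i hi)
    _ = (1 + ε) * ∑ i ∈ s, w i - η * ∑ i ∈ s, w i * m i := by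
        rw [mul_sum, mul_sum, ← sum_sub_distrib]
        exact sum_congr rfl fun i _ => by ring
    _ ≤ (1 + ε) * ∑ i ∈ s, w i := sub_le_self _ (mul_nonneg hη hmargin)
    _ ≤ exp ε * ∑ i ∈ s, w i := by
        gcongr
        · exact sum_nonneg hw
        · linarith [add_one_le_exp ε]

lemma sum_weight_le_exp_pow_mul_sum {V : Type*} [Fintype V] {w m : ℕ → V → ℝ} {η ε : ℝ} {T : ℕ}
    (hw1 : ∀ v, 0 ≤ w 1 v) (hη : 0 ≤ η)
    (hupd : ∀ t ∈ Icc 1 T, ∀ v, w (t + 1) v = w t v * exp (-η * m t v))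
    (hexp : ∀ t ∈ Icc 1 T, ∀ v, exp (-η * m t v) ≤ 1 - η * m t v + ε)
    (hmargin : ∀ t ∈ Icc 1 T, 0 ≤ ∑ v, (w t v / ∑ x, w t x) * m t v) :
    ∑ v, w (T + 1) v ≤ exp ε ^ T * ∑ v, w 1 v := by
  refine le_geom (u := fun k => ∑ v, w (k + 1) v) (exp_pos _).le T fun k hk => ?_
  have ht : k + 1 ∈ Icc 1 T := mem_Icc.mpr ⟨by omega, hk⟩
  have hw : ∀ v ∈ univ, 0 ≤ w (k + 1) v := fun v _ => by
    rw [eq_mul_exp_sum_of_succ_eq_mul_exp (a := (w · v)) (fun s hs => hupd s hs v) k hk.le]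
    exact mul_nonneg (hw1 v) (exp_pos _).le
  simp only [hupd _ ht]
  exact sum_mul_exp_le_exp_mul_sum hw hη (fun v _ => hexp _ ht v)
    (sum_mul_nonneg_of_sum_div_mul_nonneg hw (hmargin _ ht))

theorem mwu_uncovered_weight_small_general {V : Type*} [Fintype V]
    (γ : ℝ) (hγ0 : 0 < γ) (hγ1 : γ < 1) (T : ℕ)
    (hT : (T : ℝ) = Real.log (1 / γ) / γ ^ 4)
    (w : ℕ → V → ℝ) (m : ℕ → V → ℝ)
    (hw1 : ∀ v, 0 < w 1 v)
    (hm : ∀ t ∈ Finset.Icc 1 T, ∀ v, -1 ≤ m t v ∧ m t v ≤ 1 / γ - 1)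
    (hupd : ∀ t ∈ Finset.Icc 1 T, ∀ v,
      w (t + 1) v = w t v * Real.exp (-(γ ^ 3) * m t v))
    (hmargin : ∀ t ∈ Finset.Icc 1 T,
      0 ≤ ∑ v, (w t v / ∑ x, w t x) * m t v)
    (U : Finset V)
    (hU : U = Finset.univ.filter fun u =>
      ∑ t ∈ Finset.Icc 1 T, m t u ≤ -(2 * γ * T)) :
    ∑ u ∈ U, w 1 u ≤ γ * ∑ v, w 1 v := by
  have hlog : exp (γ ^ 4 * T) = 1 / γ := by
    rw [hT, mul_div_cancel₀ _ (by positivity), exp_log (by positivity)]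
  have hweight : ∀ v, w (T + 1) v = w 1 v * exp (∑ t ∈ Icc 1 T, -(γ ^ 3) * m t v) := fun v =>
    eq_mul_exp_sum_of_succ_eq_mul_exp (a := (w · v)) (fun t ht => hupd t ht v) T le_rfl
  have hpotential : ∑ v, w (T + 1) v ≤ exp (γ ^ 4 * T) * ∑ v, w 1 v := by
    rw [mul_comm (γ ^ 4), exp_nat_mul]
    exact sum_weight_le_exp_pow_mul_sum (fun v => (hw1 v).le) (by positivity) hupd
      (fun t ht v => exp_neg_cube_mul_le hγ0 hγ1.le (hm t ht v).1 (hm t ht v).2) hmargin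
  have huncovered : ∀ u ∈ U, w 1 u * exp (2 * (γ ^ 4 * T)) ≤ w (T + 1) u := by
    intro u hu
    rw [hU, mem_filter] at hu
    rw [hweight u, ← mul_sum]
    refine mul_le_mul_of_nonneg_left (exp_le_exp.mpr ?_) (hw1 u).le
    nlinarith [pow_pos hγ0 3]
  have hcompare : (∑ u ∈ U, w 1 u) * exp (2 * (γ ^ 4 * T)) ≤ exp (γ ^ 4 * T) * ∑ v, w 1 v :=
    calc (∑ u ∈ U, w 1 u) * exp (2 * (γ ^ 4 * T)) ≤ ∑ u ∈ U, w (T + 1) u := by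
          rw [sum_mul]; exact sum_le_sum huncovered
      _ ≤ ∑ v, w (T + 1) v := sum_le_sum_of_subset_of_nonneg (subset_univ U) fun v _ _ => by
          rw [hweight v]; exact (mul_pos (hw1 v) (exp_pos _)).le
      _ ≤ exp (γ ^ 4 * T) * ∑ v, w 1 v := hpotential
  rw [two_mul, exp_add, hlog] at hcompare
  field_simp at hcompare
  exact hcompare

/-- MWU: uncovered weight is small.  Under the MWU update with
`T = log(1/γ)/γ⁴` rounds and nonnegative round margins `⟨p^{(t)}, m^{(t)}⟩ ≥ 0`,
the set `U` of indices `u` with `Σ_{t≤T} m_u^{(t)} ≤ −2γT` satisfies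
`Σ_{u∈U} w_u^{(1)} ≤ γ · Σ_v w_v^{(1)}`. -/
theorem mwu_uncovered_weight_small {V : Type*} [Fintype V] [Nonempty V]
    (γ : ℝ) (hγ0 : 0 < γ) (hγ1 : γ < 1) (T : ℕ)
    (hT : (T : ℝ) = Real.log (1 / γ) / γ ^ 4)
    (w : ℕ → V → ℝ) (m : ℕ → V → ℝ)
    (hw1 : ∀ v, 0 < w 1 v)
    (hm : ∀ t ∈ Finset.Icc 1 T, ∀ v, -1 ≤ m t v ∧ m t v ≤ 1 / γ - 1)
    (hupd : ∀ t ∈ Finset.Icc 1 T, ∀ v,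
      w (t + 1) v = w t v * Real.exp (-(γ ^ 3) * m t v))
    (hmargin : ∀ t ∈ Finset.Icc 1 T,
      0 ≤ ∑ v, (w t v / ∑ x, w t x) * m t v)
    (U : Finset V)
    (hU : U = Finset.univ.filter fun u =>
      ∑ t ∈ Finset.Icc 1 T, m t u ≤ -(2 * γ * T)) :
    ∑ u ∈ U, w 1 u ≤ γ * ∑ v, w 1 v :=
  mwu_uncovered_weight_small_general γ hγ0 hγ1 T hT w m hw1 hm hupd hmargin U hU
end
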